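/- Let M be an irreducible nonnegative square real matrix. Then the spectral radius δ₀ of M is an eigenvalue of M of algebraic multiplicity one, and δ₀ ≥ |δ| for every eigenvalue δ of M. -/

import Mathlib

/-!
Let `r` be the largest modulus of an eigenvalue of `M`, and `v` an eigenvector for an eigenvalue
of modulus `r`. The triangle inequality gives `r • |v| ≤ M *ᵥ |v|`. If this were strict somewhere,
a polynomial `P` in `M` with positive entries (it exists because the graph of `M` is strongly
connected) would give `z = P *ᵥ |v| > 0` with `(r + ε) • z ≤ M *ᵥ z`; then `(r + ε) ^ k ≤ ‖M ^ k‖`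
and Gelfand's formula yields an eigenvalue of modulus at least `r + ε`. So `|v|` is an eigenvector
for `r`, and it is positive since the zero set of a nonnegative eigenvector is closed under the
edges of the graph.

Hence no eigenvector for `r` has a zero entry, and the eigenspace is the line through a positive
eigenvector `u`. The same argument for `Mᵀ` gives a positive left eigenvector `w`. It vanishes on
the range of `M - r` but not on `u`, so there is no Jordan chain of length two: the generalized
eigenspace is that line too, and the algebraic multiplicity of `r` is one.
-/

open Matrix Complex Polynomial Module Filter Topology
open scoped NNReal ENNReal

theorem spectrum.coe_le_spectralRadius_of_pow_le {A : Type*} [NormedRing A] [NormedAlgebra ℂ A]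
    [CompleteSpace A] (a : A) {t : ℝ≥0} (h : ∀ k : ℕ, t ^ k ≤ ‖a ^ k‖₊) :
    (t : ℝ≥0∞) ≤ spectralRadius ℂ a := by
  refine ge_of_tendsto (spectrum.pow_nnnorm_pow_one_div_tendsto_nhds_spectralRadius a) ?_
  filter_upwards [eventually_ne_atTop 0] with k hk
  calc (t : ℝ≥0∞) = ((t ^ k : ℝ≥0) : ℝ≥0∞) ^ (1 / k : ℝ) := by
        rw [ENNReal.coe_pow, ← ENNReal.rpow_natCast, ← ENNReal.rpow_mul,
          mul_one_div_cancel (by exact_mod_cast hk), ENNReal.rpow_one]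
    _ ≤ (‖a ^ k‖₊ : ℝ≥0∞) ^ (1 / k : ℝ) := by gcongr; exact h k

theorem exists_pos_smul_le {ι : Type*} [Finite ι] {y : ι → ℝ} (hy : ∀ i, 0 < y i)
    (z : ι → ℝ) : ∃ ε > (0 : ℝ), ε • z ≤ y := by
  have h : ∀ᶠ ε in 𝓝[>] (0 : ℝ), ∀ i, ε * z i < y i :=
    nhdsWithin_le_nhds <| eventually_all.mpr fun i =>
      ((continuous_mul_const (z i)).tendsto' 0 0 (zero_mul _)).eventually (eventually_lt_nhds (hy i))
  obtain ⟨ε, hεz, hε⟩ := (h.and self_mem_nhdsWithin).exists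
  exact ⟨ε, hε, fun i => (hεz i).le⟩

theorem Submodule.eq_span_singleton_of_apply_ne_zero {K ι : Type*} [Field K]
    {W : Submodule K (ι → K)} (hW : ∀ v ∈ W, v ≠ 0 → ∀ i, v i ≠ 0) {x : ι → K}
    (hx : x ∈ W) (hx0 : x ≠ 0) : W = K ∙ x := by
  refine le_antisymm (fun v hv => ?_) ((span_singleton_le_iff_mem x W).mpr hx)
  obtain ⟨i, hi⟩ := Function.ne_iff.mp hx0
  by_contra hvx
  have hdiff : v - (v i / x i) • x ≠ 0 := fun h => hvx <| by
    rw [sub_eq_zero.mp h]; exact smul_mem _ _ (mem_span_singleton_self x)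
  exact hW _ (W.sub_mem hv (W.smul_mem _ hx)) hdiff i (by simp [div_mul_cancel₀ _ hi])

theorem Module.End.maxGenEigenspace_eq_of_dual {K V : Type*} [Field K] [AddCommGroup V]
    [Module K V] {f : End K V} {μ : K} {x : V} (hx : f.eigenspace μ = K ∙ x)
    (φ : Dual K V) (hφ : ∀ v, φ (f v) = μ * φ v) (hφx : φ x ≠ 0) :
    f.maxGenEigenspace μ = K ∙ x := by
  set g := f - μ • (1 : End K V)
  have hker : LinearMap.ker g = f.eigenspace μ := by
    ext v; simp [g, sub_eq_zero]
  have hsq : LinearMap.ker (g ^ 1) = LinearMap.ker (g ^ Nat.succ 1) := by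
    refine le_antisymm (LinearMap.ker_le_ker_comp _ _) fun v hv => ?_
    have hgv : g v ∈ K ∙ x := by
      rw [← hx, ← hker]
      simpa [pow_succ, LinearMap.mem_ker] using hv
    obtain ⟨c, hc⟩ := Submodule.mem_span_singleton.mp hgv
    have hφg : φ (g v) = 0 := by simp [g, hφ]
    rw [← hc, map_smul, smul_eq_mul, mul_eq_zero] at hφg
    simp [LinearMap.mem_ker, ← hc, hφg.resolve_right hφx]
  refine le_antisymm (fun v hv => ?_) (hx ▸ eigenspace_le_maxGenEigenspace)
  obtain ⟨k, hk⟩ := (mem_maxGenEigenspace f μ v).mp hv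
  rw [← hx, ← hker, ← pow_one g, ker_pow_constant hsq k, pow_add, mul_eq_comp]
  exact LinearMap.ker_le_ker_comp _ _ hk

namespace Matrix

variable {ι : Type*}

/-- Paths may be empty, so unlike `Matrix.IsIrreducible` this holds for the `1 × 1` zero
matrix. -/
def IsStronglyConnected {R : Type*} [Zero R] (M : Matrix ι ι R) : Prop :=
  ∀ i j, Relation.ReflTransGen (fun a b => M a b ≠ 0) i j

theorem IsStronglyConnected.transpose {R : Type*} [Zero R] {M : Matrix ι ι R}
    (hconn : M.IsStronglyConnected) : Mᵀ.IsStronglyConnected :=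
  fun i j => (hconn j i).swap

theorem dotProduct_mulVec_of_transpose_mulVec_eq_smul {R : Type*} [CommSemiring R] [Fintype ι]
    {A : Matrix ι ι R} {w : ι → R} {μ : R} (hw : Aᵀ *ᵥ w = μ • w) (v : ι → R) :
    w ⬝ᵥ (A *ᵥ v) = μ * (w ⬝ᵥ v) := by
  rw [dotProduct_mulVec, ← mulVec_transpose, hw, smul_dotProduct, smul_eq_mul]

variable [Fintype ι]

theorem mulVec_mono_of_nonneg {m : Type*} {M : Matrix m ι ℝ} (hM : ∀ i j, 0 ≤ M i j)
    {x y : ι → ℝ} (hxy : x ≤ y) : M *ᵥ x ≤ M *ᵥ y :=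
  fun i => dotProduct_le_dotProduct_of_nonneg_left hxy (hM i)

theorem mulVec_pos_of_pos {m : Type*} {P : Matrix m ι ℝ} (hP : ∀ i j, 0 < P i j) {x : ι → ℝ}
    (hx : 0 ≤ x) (hx0 : x ≠ 0) (i : m) : 0 < (P *ᵥ x) i := by
  obtain ⟨k, hk⟩ := Function.ne_iff.mp hx0
  exact Finset.sum_pos' (fun l _ => mul_nonneg (hP i l).le (hx l))
    ⟨k, Finset.mem_univ k, mul_pos (hP i k) ((hx k).lt_of_ne' hk)⟩

theorem map_ofReal_mulVec_eq_smul {M : Matrix ι ι ℝ} {u : ι → ℝ} {r : ℝ} (h : M *ᵥ u = r • u) :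
    M.map ofReal *ᵥ (fun i => (u i : ℂ)) = (r : ℂ) • fun i => (u i : ℂ) := by
  ext i
  simpa [mulVec, dotProduct] using congrArg ofReal (congrFun h i)

variable {M : Matrix ι ι ℝ}

theorem norm_smul_le_mulVec_norm (hM : ∀ i j, 0 ≤ M i j) {v : ι → ℂ} {μ : ℂ}
    (h : M.map ofReal *ᵥ v = μ • v) : ‖μ‖ • (fun i => ‖v i‖) ≤ M *ᵥ fun i => ‖v i‖ := by
  intro i
  calc ‖μ‖ * ‖v i‖ = ‖∑ j, (M i j : ℂ) * v j‖ := by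
        rw [← norm_mul, ← smul_eq_mul, ← Pi.smul_apply, ← h]; rfl
    _ ≤ ∑ j, ‖(M i j : ℂ) * v j‖ := norm_sum_le _ _
    _ = (M *ᵥ fun i => ‖v i‖) i := by simp [mulVec, dotProduct, abs_of_nonneg (hM i _)]

theorem IsStronglyConnected.pos_of_mulVec_eq_smul (hconn : M.IsStronglyConnected)
    (hM : ∀ i j, 0 ≤ M i j) {u : ι → ℝ} (hu : 0 ≤ u) (hu0 : u ≠ 0) {r : ℝ}
    (h : M *ᵥ u = r • u) (i : ι) : 0 < u i := by
  have hzero {a b : ι} (hab : Relation.ReflTransGen (fun a b => M a b ≠ 0) a b) (ha : u a = 0) :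
      u b = 0 := by
    induction hab with
    | refl => exact ha
    | @tail c d _ hcd ih =>
      have hc : (M *ᵥ u) c = 0 := by rw [h, Pi.smul_apply, ih, smul_zero]
      have := (Finset.sum_eq_zero_iff_of_nonneg fun l _ => mul_nonneg (hM _ l) (hu l)).mp hc d
        (Finset.mem_univ d)
      exact (mul_eq_zero.mp this).resolve_left hcd
  obtain ⟨k, hk⟩ := Function.ne_iff.mp hu0
  exact (hu i).lt_of_ne fun hi => hk (hzero (hconn i k) hi.symm)

section LinftyOpNorm

attribute [local instance] Matrix.linftyOpNormedAddCommGroup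

theorem le_linfty_opNorm_of_smul_le_mulVec [Nonempty ι] {B : Matrix ι ι ℝ} {z : ι → ℝ}
    (hz : ∀ i, 0 < z i) {s : ℝ} (h : s • z ≤ B *ᵥ z) : s ≤ ‖B‖ := by
  obtain ⟨i, hi⟩ := Finite.exists_max z
  have hzi : ‖z‖ ≤ z i :=
    (pi_norm_le_iff_of_nonneg (hz i).le).mpr fun j => by
      rw [Real.norm_of_nonneg (hz j).le]; exact hi j
  refine le_of_mul_le_mul_right ?_ (hz i)
  calc s * z i ≤ (B *ᵥ z) i := h i
    _ ≤ ‖B *ᵥ z‖ := (le_abs_self _).trans (norm_le_pi_norm (B *ᵥ z) i)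
    _ ≤ ‖B‖ * ‖z‖ := linfty_opNorm_mulVec B z
    _ ≤ ‖B‖ * z i := by gcongr

theorem linfty_opNorm_map_ofReal (B : Matrix ι ι ℝ) : ‖B.map ofReal‖ = ‖B‖ := by
  simp [linfty_opNorm_def]

end LinftyOpNorm

variable [DecidableEq ι]

theorem mem_spectrum_iff_mem_roots_charpoly {K : Type*} [Field K] {A : Matrix ι ι K} {μ : K} :
    μ ∈ spectrum K A ↔ μ ∈ A.charpoly.roots := by
  rw [mem_spectrum_iff_isRoot_charpoly, mem_roots A.charpoly_monic.ne_zero]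

theorem spectrum_transpose {K : Type*} [Field K] (A : Matrix ι ι K) :
    spectrum K Aᵀ = spectrum K A := by
  ext μ; simp [mem_spectrum_iff_isRoot_charpoly, charpoly_transpose]

theorem nonempty_of_mem_spectrum {K : Type*} [Field K] {A : Matrix ι ι K} {μ : K}
    (hμ : μ ∈ spectrum K A) : Nonempty ι := by
  by_contra h
  have : IsEmpty ι := not_nonempty_iff.mp h
  simp [spectrum.of_subsingleton] at hμ

theorem exists_mulVec_eq_smul_of_mem_spectrum {K : Type*} [Field K] {A : Matrix ι ι K} {μ : K}
    (hμ : μ ∈ spectrum K A) : ∃ v ≠ 0, A *ᵥ v = μ • v := by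
  rw [← spectrum_toLin', ← End.hasEigenvalue_iff_mem_spectrum] at hμ
  obtain ⟨v, hv⟩ := hμ.exists_hasEigenvector
  exact ⟨v, hv.2, by simpa using hv.apply_eq_smul⟩

theorem pow_smul_le_pow_mulVec (hM : ∀ i j, 0 ≤ M i j) {z : ι → ℝ} {t : ℝ} (ht : 0 ≤ t)
    (h : t • z ≤ M *ᵥ z) (k : ℕ) : t ^ k • z ≤ (M ^ k) *ᵥ z := by
  induction k with
  | zero => simp
  | succ k ih =>
    calc t ^ (k + 1) • z = t ^ k • (t • z) := by rw [pow_succ, mul_smul]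
      _ ≤ t ^ k • (M *ᵥ z) := smul_le_smul_of_nonneg_left h (pow_nonneg ht k)
      _ = M *ᵥ (t ^ k • z) := (mulVec_smul M _ z).symm
      _ ≤ M *ᵥ ((M ^ k) *ᵥ z) := mulVec_mono_of_nonneg hM ih
      _ = (M ^ (k + 1)) *ᵥ z := by rw [mulVec_mulVec, pow_succ']

section LinftyOpNorm

attribute [local instance] Matrix.linftyOpNormedRing Matrix.linftyOpNormedAlgebra

theorem exists_mem_spectrum_le_norm_of_smul_le_mulVec [Nonempty ι] (hM : ∀ i j, 0 ≤ M i j)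
    {z : ι → ℝ} (hz : ∀ i, 0 < z i) {t : ℝ} (ht : 0 ≤ t) (h : t • z ≤ M *ᵥ z) :
    ∃ μ ∈ spectrum ℂ (M.map ofReal), t ≤ ‖μ‖ := by
  have : CompleteSpace (Matrix ι ι ℂ) := FiniteDimensional.complete ℂ _
  have hpow (k : ℕ) : t.toNNReal ^ k ≤ ‖M.map ofReal ^ k‖₊ := by
    have hmap : M.map ofReal ^ k = (M ^ k).map ofReal := (map_pow ofRealHom.mapMatrix M k).symm
    rw [← NNReal.coe_le_coe, NNReal.coe_pow, Real.coe_toNNReal _ ht, coe_nnnorm, hmap,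
      linfty_opNorm_map_ofReal]
    exact le_linfty_opNorm_of_smul_le_mulVec hz (pow_smul_le_pow_mulVec hM ht h k)
  obtain ⟨μ, hμ, hμr⟩ := spectrum.exists_nnnorm_eq_spectralRadius (M.map ofReal)
  refine ⟨μ, hμ, ?_⟩
  have := (spectrum.coe_le_spectralRadius_of_pow_le _ hpow).trans_eq hμr.symm
  rwa [ENNReal.coe_le_coe, ← NNReal.coe_le_coe, Real.coe_toNNReal _ ht] at this

end LinftyOpNorm

theorem exists_pow_apply_pos_of_reflTransGen (hM : ∀ i j, 0 ≤ M i j) {i j : ι}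
    (h : Relation.ReflTransGen (fun a b => M a b ≠ 0) i j) : ∃ k, 0 < (M ^ k) i j := by
  induction h with
  | refl => exact ⟨0, by simp⟩
  | tail _ hbc ih =>
    obtain ⟨k, hk⟩ := ih
    refine ⟨k + 1, ?_⟩
    rw [pow_succ, mul_apply]
    exact Finset.sum_pos' (fun l _ => mul_nonneg (pow_apply_nonneg hM k _ _) (hM _ _))
      ⟨_, Finset.mem_univ _, mul_pos hk ((hM _ _).lt_of_ne' hbc)⟩

theorem IsStronglyConnected.exists_sum_pow_pos (hconn : M.IsStronglyConnected)
    (hM : ∀ i j, 0 ≤ M i j) : ∃ s : Finset ℕ, ∀ i j, 0 < (∑ k ∈ s, M ^ k) i j := by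
  choose k hk using fun i j => exists_pow_apply_pos_of_reflTransGen hM (hconn i j)
  refine ⟨Finset.univ.image fun p : ι × ι => k p.1 p.2, fun i j => ?_⟩
  rw [Matrix.sum_apply]
  exact Finset.sum_pos' (fun l _ => pow_apply_nonneg hM l i j)
    ⟨k i j, Finset.mem_image_of_mem _ (Finset.mem_univ (i, j)), hk i j⟩

theorem IsStronglyConnected.mulVec_eq_smul_of_smul_le_mulVec (hconn : M.IsStronglyConnected)
    (hM : ∀ i j, 0 ≤ M i j) {r : ℝ} (hr0 : 0 ≤ r)
    (hr : ∀ μ ∈ spectrum ℂ (M.map ofReal), ‖μ‖ ≤ r) {u : ι → ℝ} (hu : 0 ≤ u) (hu0 : u ≠ 0)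
    (h : r • u ≤ M *ᵥ u) : M *ᵥ u = r • u := by
  by_contra hne
  have : Nonempty ι := ⟨(Function.ne_iff.mp hu0).choose⟩
  obtain ⟨s, hs⟩ := hconn.exists_sum_pow_pos hM
  set P := ∑ k ∈ s, M ^ k
  have hMP : M * P = P * M :=
    (Commute.sum_right _ _ _ fun k _ => (Commute.refl M).pow_right k).eq
  obtain ⟨ε, hε, hεz⟩ :=
    exists_pos_smul_le (mulVec_pos_of_pos hs (sub_nonneg.mpr h) (sub_ne_zero.mpr hne)) (P *ᵥ u)
  have hMz : (r + ε) • (P *ᵥ u) ≤ M *ᵥ (P *ᵥ u) := by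
    have : M *ᵥ (P *ᵥ u) = r • (P *ᵥ u) + P *ᵥ (M *ᵥ u - r • u) := by
      rw [mulVec_mulVec, hMP, ← mulVec_mulVec, mulVec_sub, mulVec_smul]; abel
    rw [this, add_smul]
    exact add_le_add le_rfl hεz
  obtain ⟨μ, hμ, hle⟩ := exists_mem_spectrum_le_norm_of_smul_le_mulVec hM
    (mulVec_pos_of_pos hs hu hu0) (by positivity) hMz
  linarith [hr μ hμ]

theorem IsStronglyConnected.mulVec_norm_eq_smul (hconn : M.IsStronglyConnected)
    (hM : ∀ i j, 0 ≤ M i j) {r : ℝ} (hr : ∀ μ ∈ spectrum ℂ (M.map ofReal), ‖μ‖ ≤ r) {μ : ℂ}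
    (hμ : ‖μ‖ = r) {v : ι → ℂ} (hv0 : v ≠ 0) (hv : M.map ofReal *ᵥ v = μ • v) :
    M *ᵥ (fun i => ‖v i‖) = r • fun i => ‖v i‖ :=
  hconn.mulVec_eq_smul_of_smul_le_mulVec hM (hμ ▸ norm_nonneg μ) hr (fun _ => norm_nonneg _)
    (fun h => hv0 (funext fun i => norm_eq_zero.mp (congrFun h i)))
    (hμ ▸ norm_smul_le_mulVec_norm hM hv)

theorem IsStronglyConnected.norm_pos_of_mulVec_eq_smul (hconn : M.IsStronglyConnected)
    (hM : ∀ i j, 0 ≤ M i j) {r : ℝ} (hr : ∀ μ ∈ spectrum ℂ (M.map ofReal), ‖μ‖ ≤ r) {μ : ℂ}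
    (hμ : ‖μ‖ = r) {v : ι → ℂ} (hv0 : v ≠ 0) (hv : M.map ofReal *ᵥ v = μ • v) (i : ι) :
    0 < ‖v i‖ :=
  hconn.pos_of_mulVec_eq_smul hM (fun _ => norm_nonneg _)
    (fun h => hv0 (funext fun i => norm_eq_zero.mp (congrFun h i)))
    (hconn.mulVec_norm_eq_smul hM hr hμ hv0 hv) i

theorem IsStronglyConnected.exists_pos_mulVec_eq_smul (hconn : M.IsStronglyConnected)
    (hM : ∀ i j, 0 ≤ M i j) {r : ℝ} (hρ : IsGreatest (norm '' spectrum ℂ (M.map ofReal)) r) :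
    ∃ u : ι → ℝ, (∀ i, 0 < u i) ∧ M *ᵥ u = r • u := by
  obtain ⟨μ, hμ, hμr⟩ := hρ.1
  have hr : ∀ ν ∈ spectrum ℂ (M.map ofReal), ‖ν‖ ≤ r := fun ν hν => hρ.2 ⟨ν, hν, rfl⟩
  obtain ⟨v, hv0, hv⟩ := exists_mulVec_eq_smul_of_mem_spectrum hμ
  exact ⟨_, hconn.norm_pos_of_mulVec_eq_smul hM hr hμr hv0 hv,
    hconn.mulVec_norm_eq_smul hM hr hμr hv0 hv⟩

theorem IsStronglyConnected.eigenspace_eq_span (hconn : M.IsStronglyConnected)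
    (hM : ∀ i j, 0 ≤ M i j) {r : ℝ} (hr0 : 0 ≤ r)
    (hr : ∀ μ ∈ spectrum ℂ (M.map ofReal), ‖μ‖ ≤ r) {u : ι → ℝ} (hu0 : u ≠ 0)
    (hMu : M *ᵥ u = r • u) :
    End.eigenspace (toLin' (M.map ofReal)) r = ℂ ∙ fun i => (u i : ℂ) := by
  have hr' : ‖(r : ℂ)‖ = r := by rw [Complex.norm_real, Real.norm_of_nonneg hr0]
  refine Submodule.eq_span_singleton_of_apply_ne_zero (fun v hv hv0 i => ?_) ?_ ?_
  · exact norm_pos_iff.mp <| hconn.norm_pos_of_mulVec_eq_smul hM hr hr' hv0 (by simpa using hv) i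
  · simpa using map_ofReal_mulVec_eq_smul hMu
  · simpa [funext_iff] using hu0

theorem IsStronglyConnected.rootMultiplicity_charpoly_eq_one (hconn : M.IsStronglyConnected)
    (hM : ∀ i j, 0 ≤ M i j) {r : ℝ} (hρ : IsGreatest (norm '' spectrum ℂ (M.map ofReal)) r) :
    (M.map ofReal).charpoly.rootMultiplicity (r : ℂ) = 1 := by
  have hr : ∀ μ ∈ spectrum ℂ (M.map ofReal), ‖μ‖ ≤ r := fun μ hμ => hρ.2 ⟨μ, hμ, rfl⟩
  obtain ⟨μ, hμ, hμr⟩ := hρ.1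
  have : Nonempty ι := nonempty_of_mem_spectrum hμ
  obtain ⟨u, hu, hMu⟩ := hconn.exists_pos_mulVec_eq_smul hM hρ
  obtain ⟨w, hw, hMw⟩ := hconn.transpose.exists_pos_mulVec_eq_smul (fun i j => hM j i)
    (by rwa [transpose_map, spectrum_transpose])
  have hu0 : u ≠ 0 := Function.ne_iff.mpr ⟨Classical.arbitrary ι, (hu _).ne'⟩
  have hwu : (fun i => (w i : ℂ)) ⬝ᵥ (fun i => (u i : ℂ)) ≠ 0 := by
    have : 0 < w ⬝ᵥ u := Finset.sum_pos (fun i _ => mul_pos (hw i) (hu i)) Finset.univ_nonempty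
    simpa [dotProduct] using ofReal_ne_zero.mpr this.ne'
  have hmax := End.maxGenEigenspace_eq_of_dual
    (hconn.eigenspace_eq_span hM (hμr ▸ norm_nonneg μ) hr hu0 hMu) (dotProductEquiv ℂ ι _)
    (dotProduct_mulVec_of_transpose_mulVec_eq_smul <| by
      rw [← transpose_map]; exact map_ofReal_mulVec_eq_smul hMw) hwu
  rw [← charpoly_toLin', ← LinearMap.finrank_maxGenEigenspace_eq, hmax,
    finrank_span_singleton (by simpa [funext_iff] using hu0)]

end Matrix

theorem stmt_3_general (n : ℕ) (M : Matrix (Fin n) (Fin n) ℝ)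
    (hnonneg : ∀ i j, 0 ≤ M i j)
    (hirr : ∀ i j : Fin n, Relation.ReflTransGen (fun a b => M a b ≠ 0) i j)
    (δ₀ : ℝ)
    (hδ₀ : IsGreatest {x : ℝ | ∃ δ ∈ (M.map (Complex.ofReal)).charpoly.roots,
        ‖δ‖ = x} δ₀) :
    ((δ₀ : ℂ) ∈ (M.map (Complex.ofReal)).charpoly.roots ∧
      (M.map (Complex.ofReal)).charpoly.rootMultiplicity (δ₀ : ℂ) = 1) ∧
    ∀ δ ∈ (M.map (Complex.ofReal)).charpoly.roots, ‖δ‖ ≤ δ₀ := by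
  have hρ : IsGreatest (norm '' spectrum ℂ (M.map ofReal)) δ₀ := by
    simpa only [Set.image, mem_spectrum_iff_mem_roots_charpoly] using hδ₀
  have hmult : (M.map ofReal).charpoly.rootMultiplicity (δ₀ : ℂ) = 1 :=
    IsStronglyConnected.rootMultiplicity_charpoly_eq_one hirr hnonneg hρ
  have hroot : (δ₀ : ℂ) ∈ (M.map ofReal).charpoly.roots :=
    (mem_roots (charpoly_monic _).ne_zero).mpr
      ((rootMultiplicity_pos (charpoly_monic _).ne_zero).mp (hmult ▸ one_pos))
  exact ⟨⟨hroot, hmult⟩, fun δ hδ => hρ.2 ⟨δ, mem_spectrum_iff_mem_roots_charpoly.mpr hδ, rfl⟩⟩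

/-- Perron–Frobenius: if `M` is an irreducible nonnegative square real matrix
(irreducible meaning that the directed graph with an edge `i → j` whenever
`M i j ≠ 0` is strongly connected), and `δ₀` is its spectral radius (the maximum
of the moduli of its complex eigenvalues), then `δ₀` is an eigenvalue of `M` of
algebraic multiplicity one, and `δ₀ ≥ |δ|` for every eigenvalue `δ` of `M`. -/
theorem stmt_3 (n : ℕ) (hn : 0 < n) (M : Matrix (Fin n) (Fin n) ℝ)
    (hnonneg : ∀ i j, 0 ≤ M i j)
    (hirr : ∀ i j : Fin n, Relation.ReflTransGen (fun a b => M a b ≠ 0) i j)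
    (δ₀ : ℝ)
    (hδ₀ : IsGreatest {x : ℝ | ∃ δ ∈ (M.map (Complex.ofReal)).charpoly.roots,
        ‖δ‖ = x} δ₀) :
    ((δ₀ : ℂ) ∈ (M.map (Complex.ofReal)).charpoly.roots ∧
      (M.map (Complex.ofReal)).charpoly.rootMultiplicity (δ₀ : ℂ) = 1) ∧
    ∀ δ ∈ (M.map (Complex.ofReal)).charpoly.roots, ‖δ‖ ≤ δ₀ :=
  stmt_3_general n M hnonneg hirr δ₀ hδ₀
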